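/- arXiv:2205.14810 — 5 statements merged into one kernel-verified Lean document; each statement's English description precedes it below -/
import Mathlib

section
/- Let C₃, D₃, C₄, D₄, E be quaternion matrices of compatible sizes with M = R_{C₃} C₄, N = D₄ L_{D₃}. If the equation C₃ X₃ D₃ + C₄ X₄ D₄ = E has a solution (X₃, X₄), then R_M R_{C₃} E = 0, E L_{D₃} L_N = 0, R_{C₃} E L_{D₄} = 0, and R_{C₄} E L_{D₃} = 0. -/
open Matrix Quaternion

noncomputable section

abbrev ℍq : Type := Quaternion ℝ

/-- The four Penrose conditions: `X` is a Moore–Penrose inverse of `D`. -/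
def IsMP {m n : Type*} [Fintype m] [Fintype n]
    (D : Matrix m n ℍq) (X : Matrix n m ℍq) : Prop :=
  D * X * D = D ∧ X * D * X = X ∧ (D * X)ᴴ = D * X ∧ (X * D)ᴴ = X * D

theorem two_term_necessity {m p s q t u : ℕ}
    (C₃ : Matrix (Fin m) (Fin p) ℍq) (C₃d : Matrix (Fin p) (Fin m) ℍq)
    (D₃ : Matrix (Fin s) (Fin q) ℍq) (D₃d : Matrix (Fin q) (Fin s) ℍq)
    (C₄ : Matrix (Fin m) (Fin t) ℍq) (C₄d : Matrix (Fin t) (Fin m) ℍq)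
    (D₄ : Matrix (Fin u) (Fin q) ℍq) (D₄d : Matrix (Fin q) (Fin u) ℍq)
    (E : Matrix (Fin m) (Fin q) ℍq)
    (hC₃ : IsMP C₃ C₃d) (hD₃ : IsMP D₃ D₃d) (hC₄ : IsMP C₄ C₄d) (hD₄ : IsMP D₄ D₄d)
    (M : Matrix (Fin m) (Fin t) ℍq) (hM : M = (1 - C₃ * C₃d) * C₄)
    (Md : Matrix (Fin t) (Fin m) ℍq) (hMd : IsMP M Md)
    (N : Matrix (Fin u) (Fin q) ℍq) (hN : N = D₄ * (1 - D₃d * D₃))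
    (Nd : Matrix (Fin q) (Fin u) ℍq) (hNd : IsMP N Nd)
    (X₃ : Matrix (Fin p) (Fin s) ℍq) (X₄ : Matrix (Fin t) (Fin u) ℍq)
    (hsol : C₃ * X₃ * D₃ + C₄ * X₄ * D₄ = E) :
    (1 - M * Md) * ((1 - C₃ * C₃d) * E) = 0 ∧
    E * (1 - D₃d * D₃) * (1 - Nd * N) = 0 ∧
    (1 - C₃ * C₃d) * E * (1 - D₄d * D₄) = 0 ∧
    (1 - C₄ * C₄d) * E * (1 - D₃d * D₃) = 0 := by
  subst hsol
  have hC3 : ∀ {k : ℕ} (Z : Matrix (Fin p) (Fin k) ℍq),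
      (1 - C₃ * C₃d) * (C₃ * Z) = 0 := by
    intro k Z; rw [← Matrix.mul_assoc, Matrix.sub_mul, Matrix.one_mul, hC₃.1, sub_self, Matrix.zero_mul]
  have hC4 : ∀ {k : ℕ} (Z : Matrix (Fin t) (Fin k) ℍq),
      (1 - C₄ * C₄d) * (C₄ * Z) = 0 := by
    intro k Z; rw [← Matrix.mul_assoc, Matrix.sub_mul, Matrix.one_mul, hC₄.1, sub_self, Matrix.zero_mul]
  have hD3 : D₃ * (1 - D₃d * D₃) = 0 := by
    rw [Matrix.mul_sub, Matrix.mul_one, ← Matrix.mul_assoc, hD₃.1, sub_self]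
  have hD4 : D₄ * (1 - D₄d * D₄) = 0 := by
    rw [Matrix.mul_sub, Matrix.mul_one, ← Matrix.mul_assoc, hD₄.1, sub_self]
  have hMM : ∀ {k : ℕ} (Z : Matrix (Fin t) (Fin k) ℍq),
      (1 - M * Md) * (M * Z) = 0 := by
    intro k Z; rw [← Matrix.mul_assoc, Matrix.sub_mul, Matrix.one_mul, hMd.1, sub_self, Matrix.zero_mul]
  have hNN : N * (1 - Nd * N) = 0 := by
    rw [Matrix.mul_sub, Matrix.mul_one, ← Matrix.mul_assoc, hNd.1, sub_self]
  have hMC : ∀ {k : ℕ} (Z : Matrix (Fin t) (Fin k) ℍq),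
      (1 - C₃ * C₃d) * (C₄ * Z) = M * Z := by
    intro k Z; rw [← Matrix.mul_assoc, ← hM]
  refine ⟨?_, ?_, ?_, ?_⟩
  · simp [Matrix.mul_add, Matrix.add_mul, Matrix.mul_assoc, hC3, hMC, hMM]
  · simp [Matrix.mul_add, Matrix.add_mul, Matrix.mul_assoc, hD3, ← hN, hNN]
  · simp [Matrix.mul_add, Matrix.add_mul, Matrix.mul_assoc, hC3, hD4]
  · simp [Matrix.mul_add, Matrix.add_mul, Matrix.mul_assoc, hC4, hD3]
end
end

section
/- Fix η ∈ {i, j, k}. Let F be a quaternion matrix and E a square quaternion matrix with E^{η*} = E. The equation F Z F^{η*} = E has an η-Hermitian solution Z if and only if it has any solution; moreover it has a solution if and only if R_F E = 0. -/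
open Matrix Quaternion

noncomputable section

/-- `X^{η*} = -η X* η`, computed entrywise on the conjugate transpose. -/
def etaConj {m n : Type*} (η : ℍq) (X : Matrix m n ℍq) : Matrix n m ℍq :=
  (Xᴴ).map (fun a => -(η * a * η))

/-- `η` is one of the quaternion units `i`, `j`, `k`. -/
def IsUnitEta (η : ℍq) : Prop :=
  η = (⟨0,1,0,0⟩ : ℍq) ∨ η = (⟨0,0,1,0⟩ : ℍq) ∨ η = (⟨0,0,0,1⟩ : ℍq)

lemma eta_sq {η : ℍq} (hη : IsUnitEta η) : η * η = -1 := by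
  rcases hη with h|h|h <;> obtain ⟨a, b, c, d⟩ := QuaternionAlgebra.ext_iff.mp h <;> clear h <;>
    · ext <;> simp_all [Quaternion.re_mul, Quaternion.imI_mul, Quaternion.imJ_mul, Quaternion.imK_mul]

lemma eta_star {η : ℍq} (hη : IsUnitEta η) : star η = -η := by
  rcases hη with h|h|h <;> obtain ⟨a, b, c, d⟩ := QuaternionAlgebra.ext_iff.mp h <;> clear h <;> · ext <;> simp_all

lemma etaConj_etaConj {η : ℍq} (h1 : η * η = -1) (h2 : star η = -η)
    {p q : Type*} (X : Matrix p q ℍq) : etaConj η (etaConj η X) = X := by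
  apply Matrix.ext; intro i j
  simp only [etaConj, Matrix.map_apply, Matrix.conjTranspose_apply, star_neg, StarMul.star_mul, h2,
    star_star, neg_mul, mul_neg, neg_neg]
  rw [show η * (η * (X i j * η)) * η = η * η * X i j * (η * η) from by noncomm_ring, h1]
  simp

lemma etaConj_mul {η : ℍq} (h1 : η * η = -1)
    {p q r : Type*} [Fintype q] (A : Matrix p q ℍq) (B : Matrix q r ℍq) :
    etaConj η (A * B) = etaConj η B * etaConj η A := by
  apply Matrix.ext; intro i j
  simp only [etaConj, Matrix.map_apply, Matrix.conjTranspose_apply, Matrix.mul_apply, star_sum,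
    StarMul.star_mul, Finset.mul_sum, Finset.sum_mul, neg_mul, mul_neg, neg_neg]
  rw [← Finset.sum_neg_distrib]
  refine Finset.sum_congr rfl fun x _ => ?_
  rw [show η * star (B x i) * η * (η * star (A j x) * η)
      = η * star (B x i) * (η * η) * (star (A j x) * η) from by noncomm_ring, h1]
  noncomm_ring

theorem etaHermitian_solvability {m n : ℕ} (η : ℍq) (hη : IsUnitEta η)
    (F : Matrix (Fin m) (Fin n) ℍq) (Fd : Matrix (Fin n) (Fin m) ℍq)
    (hF : IsMP F Fd)
    (E : Matrix (Fin m) (Fin m) ℍq) (hE : etaConj η E = E) :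
    ((∃ Z : Matrix (Fin n) (Fin n) ℍq,
        etaConj η Z = Z ∧ F * Z * etaConj η F = E) ↔
      (∃ Z : Matrix (Fin n) (Fin n) ℍq, F * Z * etaConj η F = E)) ∧
    ((∃ Z : Matrix (Fin n) (Fin n) ℍq, F * Z * etaConj η F = E) ↔
      (1 - F * Fd) * E = 0) := by
  have h1 := eta_sq hη
  have h2 := eta_star hη
  -- if solvable, then `(1 - F Fd) E = 0`
  have fwd : (∃ Z : Matrix (Fin n) (Fin n) ℍq, F * Z * etaConj η F = E) →
      (1 - F * Fd) * E = 0 := by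
    rintro ⟨Z, hZ⟩
    rw [← hZ, sub_mul, one_mul, Matrix.mul_assoc F Z, ← Matrix.mul_assoc (F * Fd) F,
      hF.1, ← Matrix.mul_assoc, sub_self]
  -- if `(1 - F Fd) E = 0`, then `Fd E (Fd)^{η*}` is an η-Hermitian solution
  have bwd : (1 - F * Fd) * E = 0 →
      ∃ Z : Matrix (Fin n) (Fin n) ℍq,
        etaConj η Z = Z ∧ F * Z * etaConj η F = E := by
    intro h0
    have hFE : F * Fd * E = E := by
      rw [sub_mul, one_mul, sub_eq_zero] at h0
      exact h0.symm
    have hEF : E * etaConj η (F * Fd) = E := by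
      have := congrArg (etaConj η) hFE
      rwa [etaConj_mul h1, hE] at this
    refine ⟨Fd * E * etaConj η Fd, ?_, ?_⟩
    · rw [etaConj_mul h1, etaConj_mul h1, etaConj_etaConj h1 h2, hE, ← Matrix.mul_assoc]
    · rw [← Matrix.mul_assoc F (Fd * E) (etaConj η Fd), ← Matrix.mul_assoc F Fd E, hFE,
        Matrix.mul_assoc, ← etaConj_mul h1, hEF]
  exact ⟨⟨fun ⟨Z, hZ⟩ => ⟨Z, hZ.2⟩, fun hex => bwd (fwd hex)⟩,
    ⟨fwd, fun h0 => (bwd h0).imp fun Z hZ => hZ.2⟩⟩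
end
end

section
/- Let F₄, G₄, H₄, J₄, E₄, E₅ be quaternion matrices of compatible sizes satisfying R_{F₄} E₄ = 0, E₄ L_{G₄} = 0, R_{H₄} E₅ = 0, E₅ L_{J₄} = 0. Then for any choice of W₁, W₂, W₃ of appropriate sizes, Z₁ = F₄† E₄ G₄† + L_{F₄} W₁ + W₂ R_{G₄} solves F₄ Z₁ G₄ = E₄ and Z₄ = H₄† E₅ J₄† + L_{H₄} W₁ + W₃ R_{J₄} solves H₄ Z₄ J₄ = E₅; conversely every solution of each equation has this respective form. -/
open Matrix Quaternion

noncomputable section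

/-- The four Penrose conditions: `X` is a Moore–Penrose inverse of `D`. -/
private lemma solve_one {m n l k : ℕ}
    (A : Matrix (Fin m) (Fin n) ℍq) (Ad : Matrix (Fin n) (Fin m) ℍq)
    (B : Matrix (Fin l) (Fin k) ℍq) (Bd : Matrix (Fin k) (Fin l) ℍq)
    (E : Matrix (Fin m) (Fin k) ℍq)
    (hA : A * Ad * A = A) (hB : B * Bd * B = B)
    (h1 : (1 - A * Ad) * E = 0) (h2 : E * (1 - Bd * B) = 0) :
    (∀ W₁ W₂ : Matrix (Fin n) (Fin l) ℍq,
      A * (Ad * E * Bd + (1 - Ad * A) * W₁ + W₂ * (1 - B * Bd)) * B = E) ∧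
    (∀ Z : Matrix (Fin n) (Fin l) ℍq, A * Z * B = E →
      ∃ W₁ W₂ : Matrix (Fin n) (Fin l) ℍq,
        Z = Ad * E * Bd + (1 - Ad * A) * W₁ + W₂ * (1 - B * Bd)) := by
  rw [Matrix.sub_mul, Matrix.one_mul, sub_eq_zero] at h1
  rw [Matrix.mul_sub, Matrix.mul_one, sub_eq_zero] at h2
  have hAL : A * (1 - Ad * A) = 0 := by
    rw [Matrix.mul_sub, Matrix.mul_one, ← Matrix.mul_assoc, hA, sub_self]
  have hRB : (1 - B * Bd) * B = 0 := by
    rw [Matrix.sub_mul, Matrix.one_mul, hB, sub_self]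
  constructor
  · intro W₁ W₂
    rw [Matrix.mul_add, Matrix.mul_add, Matrix.add_mul, Matrix.add_mul,
      ← Matrix.mul_assoc A (1 - Ad * A), hAL, Matrix.zero_mul, Matrix.zero_mul,
      ← Matrix.mul_assoc A W₂, Matrix.mul_assoc (A * W₂), hRB, Matrix.mul_zero,
      add_zero, add_zero]
    simp only [← Matrix.mul_assoc]
    rw [← h1, Matrix.mul_assoc E Bd B, ← h2]
  · intro Z hZ
    refine ⟨Z, Ad * A * Z, ?_⟩
    have : Ad * E * Bd = Ad * A * Z * (B * Bd) := by
      rw [← hZ]; simp only [Matrix.mul_assoc]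
    rw [this, Matrix.sub_mul, Matrix.one_mul, Matrix.mul_sub, Matrix.mul_one]
    abel

theorem pair_equations_solution_form {m n l k m' k' : ℕ}
    (F₄ : Matrix (Fin m) (Fin n) ℍq) (F₄d : Matrix (Fin n) (Fin m) ℍq)
    (G₄ : Matrix (Fin l) (Fin k) ℍq) (G₄d : Matrix (Fin k) (Fin l) ℍq)
    (H₄ : Matrix (Fin m') (Fin n) ℍq) (H₄d : Matrix (Fin n) (Fin m') ℍq)
    (J₄ : Matrix (Fin l) (Fin k') ℍq) (J₄d : Matrix (Fin k') (Fin l) ℍq)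
    (E₄ : Matrix (Fin m) (Fin k) ℍq) (E₅ : Matrix (Fin m') (Fin k') ℍq)
    (hF : IsMP F₄ F₄d) (hG : IsMP G₄ G₄d) (hH : IsMP H₄ H₄d) (hJ : IsMP J₄ J₄d)
    (h1 : (1 - F₄ * F₄d) * E₄ = 0) (h2 : E₄ * (1 - G₄d * G₄) = 0)
    (h3 : (1 - H₄ * H₄d) * E₅ = 0) (h4 : E₅ * (1 - J₄d * J₄) = 0) :
    (∀ W₁ W₂ W₃ : Matrix (Fin n) (Fin l) ℍq,
      F₄ * (F₄d * E₄ * G₄d + (1 - F₄d * F₄) * W₁ + W₂ * (1 - G₄ * G₄d)) * G₄ = E₄ ∧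
      H₄ * (H₄d * E₅ * J₄d + (1 - H₄d * H₄) * W₁ + W₃ * (1 - J₄ * J₄d)) * J₄ = E₅) ∧
    (∀ Z₁ : Matrix (Fin n) (Fin l) ℍq, F₄ * Z₁ * G₄ = E₄ →
      ∃ W₁ W₂ : Matrix (Fin n) (Fin l) ℍq,
        Z₁ = F₄d * E₄ * G₄d + (1 - F₄d * F₄) * W₁ + W₂ * (1 - G₄ * G₄d)) ∧
    (∀ Z₄ : Matrix (Fin n) (Fin l) ℍq, H₄ * Z₄ * J₄ = E₅ →
      ∃ W₁ W₃ : Matrix (Fin n) (Fin l) ℍq,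
        Z₄ = H₄d * E₅ * J₄d + (1 - H₄d * H₄) * W₁ + W₃ * (1 - J₄ * J₄d)) := by
  obtain ⟨fwd1, bwd1⟩ := solve_one F₄ F₄d G₄ G₄d E₄ hF.1 hG.1 h1 h2
  obtain ⟨fwd2, bwd2⟩ := solve_one H₄ H₄d J₄ J₄d E₅ hH.1 hJ.1 h3 h4
  exact ⟨fun W₁ W₂ W₃ => ⟨fwd1 W₁ W₂, fwd2 W₁ W₃⟩, bwd1, bwd2⟩
end
end

section
/- Let A, C be quaternion matrices and set M = R_A C, where R_A = I − AA†. Then R_M R_A = R_{[A C]} in the sense that for any matrix E of compatible size, R_M R_A E = 0 if and only if the equation A X + C Y = E is solvable in X, Y. -/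
open Matrix Quaternion

noncomputable section

theorem two_term_one_sided_solvability {m n p q : ℕ}
    (A : Matrix (Fin m) (Fin n) ℍq) (Ad : Matrix (Fin n) (Fin m) ℍq)
    (C : Matrix (Fin m) (Fin p) ℍq) (hA : IsMP A Ad)
    (M : Matrix (Fin m) (Fin p) ℍq) (hM : M = (1 - A * Ad) * C)
    (Md : Matrix (Fin p) (Fin m) ℍq) (hMd : IsMP M Md) :
    ∀ E : Matrix (Fin m) (Fin q) ℍq,
      (1 - M * Md) * ((1 - A * Ad) * E) = 0 ↔
        ∃ (X : Matrix (Fin n) (Fin q) ℍq) (Y : Matrix (Fin p) (Fin q) ℍq),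
          A * X + C * Y = E := by
  intro E
  constructor
  · intro h
    set Z : Matrix (Fin p) (Fin q) ℍq := Md * ((1 - A * Ad) * E) with hZdef
    have hMZ : M * Z = (1 - A * Ad) * E := by
      rw [Matrix.sub_mul, Matrix.one_mul, sub_eq_zero] at h
      rw [hZdef, ← Matrix.mul_assoc, ← h]
    refine ⟨Ad * (E - C * Z), Z, ?_⟩
    have hCZ : C * Z - A * Ad * (C * Z) = E - A * Ad * E := by
      have h2 : (1 - A * Ad) * (C * Z) = (1 - A * Ad) * E := by
        rw [← Matrix.mul_assoc, ← hM, hMZ]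
      rwa [Matrix.sub_mul, Matrix.sub_mul, Matrix.one_mul, Matrix.one_mul] at h2
    calc A * (Ad * (E - C * Z)) + C * Z
        = A * Ad * E + (C * Z - A * Ad * (C * Z)) := by
          rw [Matrix.mul_sub Ad, Matrix.mul_sub A, ← Matrix.mul_assoc A Ad E,
            ← Matrix.mul_assoc A Ad (C * Z), sub_add_eq_add_sub, add_sub_assoc]
      _ = A * Ad * E + (E - A * Ad * E) := by rw [hCZ]
      _ = E := by abel
  · rintro ⟨X, Y, rfl⟩
    have hRA : (1 - A * Ad) * A = 0 := by
      rw [Matrix.sub_mul, Matrix.one_mul, hA.1, sub_self]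
    have hRM : (1 - M * Md) * M = 0 := by
      rw [Matrix.sub_mul, Matrix.one_mul, hMd.1, sub_self]
    have : (1 - A * Ad) * (A * X + C * Y) = M * Y := by
      rw [Matrix.mul_add, ← Matrix.mul_assoc, hRA, Matrix.zero_mul, zero_add,
        ← Matrix.mul_assoc, ← hM]
    rw [this, ← Matrix.mul_assoc, hRM, Matrix.zero_mul]
end
end

section
/- Let A, C, E be quaternion matrices with M = R_A C, S = C L_M. If R_M R_A E = 0 then X = A† E − A† C M† E and Y = M† E satisfy A X + C Y = E. -/
open Matrix Quaternion

noncomputable section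

theorem two_term_one_sided_solution {m n p q : ℕ}
    (A : Matrix (Fin m) (Fin n) ℍq) (Ad : Matrix (Fin n) (Fin m) ℍq)
    (C : Matrix (Fin m) (Fin p) ℍq) (hA : IsMP A Ad)
    (M : Matrix (Fin m) (Fin p) ℍq) (hM : M = (1 - A * Ad) * C)
    (Md : Matrix (Fin p) (Fin m) ℍq) (hMd : IsMP M Md)
    (E : Matrix (Fin m) (Fin q) ℍq)
    (h : (1 - M * Md) * ((1 - A * Ad) * E) = 0) :
    A * (Ad * E - Ad * C * Md * E) + C * (Md * E) = E := by
  obtain ⟨hA1, hA2, hA3, hA4⟩ := hA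
  -- P := A * Ad is idempotent and Hermitian
  have hPidem : (A * Ad) * (A * Ad) = A * Ad := by
    calc (A * Ad) * (A * Ad) = (A * Ad * A) * Ad := by simp only [Matrix.sub_mul, Matrix.mul_sub, Matrix.one_mul, Matrix.mul_one, Matrix.mul_assoc, sub_sub_cancel] <;> abel
    _ = A * Ad := by rw [hA1]
  have hRM : (1 - A * Ad) * M = M := by
    rw [hM]
    calc (1 - A * Ad) * ((1 - A * Ad) * C) = ((1 - A * Ad) * (1 - A * Ad)) * C := by
          simp only [Matrix.sub_mul, Matrix.mul_sub, Matrix.one_mul, Matrix.mul_one, Matrix.mul_assoc, sub_sub_cancel] <;> abel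
    _ = (1 - A * Ad) * C := by
          congr 1
          have : (1 - A * Ad) * (1 - A * Ad) = 1 - A * Ad - A * Ad + (A * Ad) * (A * Ad) := by
            simp only [Matrix.sub_mul, Matrix.mul_sub, Matrix.one_mul, Matrix.mul_one, Matrix.mul_assoc, sub_sub_cancel] <;> abel
          rw [this, hPidem]; abel
  have hMH : Mᴴ * (1 - A * Ad) = Mᴴ := by
    have := congrArg conjTranspose hRM
    simpa [Matrix.conjTranspose_mul, Matrix.conjTranspose_sub, hA3] using this
  have hMMd : (M * Md) * (1 - A * Ad) = M * Md := by
    have h1 : M * Md = Mdᴴ * Mᴴ := by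
      rw [← Matrix.conjTranspose_mul, hMd.2.2.1]
    calc (M * Md) * (1 - A * Ad) = Mdᴴ * (Mᴴ * (1 - A * Ad)) := by rw [h1]; simp only [Matrix.sub_mul, Matrix.mul_sub, Matrix.one_mul, Matrix.mul_one, Matrix.mul_assoc, sub_sub_cancel] <;> abel
    _ = Mdᴴ * Mᴴ := by rw [hMH]
    _ = M * Md := h1.symm
  -- from h : (1 - A*Ad)*E = M*Md*E
  have key : (1 - A * Ad) * E = M * Md * E := by
    have h' : (1 - A * Ad) * E - (M * Md) * ((1 - A * Ad) * E) = 0 := by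
      have : (1 - M * Md) * ((1 - A * Ad) * E)
          = (1 - A * Ad) * E - (M * Md) * ((1 - A * Ad) * E) := by simp only [Matrix.sub_mul, Matrix.mul_sub, Matrix.one_mul, Matrix.mul_one, Matrix.mul_assoc, sub_sub_cancel] <;> abel
      rw [← this]; exact h
    have h2 : (M * Md) * ((1 - A * Ad) * E) = ((M * Md) * (1 - A * Ad)) * E := by
      simp only [Matrix.sub_mul, Matrix.mul_sub, Matrix.one_mul, Matrix.mul_one, Matrix.mul_assoc, sub_sub_cancel] <;> abel
    have h3 : (M * Md) * ((1 - A * Ad) * E) = M * Md * E := by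
      rw [h2, hMMd]
    have := sub_eq_zero.mp h'
    rw [this, h3]
  have hMC : (1 - A * Ad) * (C * (Md * E)) = M * Md * E := by
    calc (1 - A * Ad) * (C * (Md * E)) = ((1 - A * Ad) * C) * Md * E := by simp only [Matrix.sub_mul, Matrix.mul_sub, Matrix.one_mul, Matrix.mul_one, Matrix.mul_assoc, sub_sub_cancel] <;> abel
    _ = M * Md * E := by rw [← hM]
  calc A * (Ad * E - Ad * C * Md * E) + C * (Md * E)
      = (A * Ad) * E + (1 - A * Ad) * (C * (Md * E)) := by simp only [Matrix.sub_mul, Matrix.mul_sub, Matrix.one_mul, Matrix.mul_one, Matrix.mul_assoc, sub_sub_cancel] <;> abel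
    _ = (A * Ad) * E + (1 - A * Ad) * E := by rw [hMC, ← key]
    _ = E := by simp only [Matrix.sub_mul, Matrix.mul_sub, Matrix.one_mul, Matrix.mul_one, Matrix.mul_assoc, sub_sub_cancel] <;> abel
end
end
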